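/- (Lemma 2.1) Let E be a field and L/E a finite separable extension such that L = L1 L2 (compositum inside L) for intermediate fields L1 and L2 of L/E whose degrees [L1 : E] and [L2 : E] are relatively prime. Then N(L/E) = N(L1/E) ∩ N(L2/E), N(L1/E) = E* ∩ N(L/L2), and there is a group isomorphism E*/N(L/E) ≅ (E*/N(L1/E)) × (E*/N(L2/E)). -/

import Mathlib

/-!
Common definitions: strictly (primarily) quasilocal fields, norm groups, class fields,
Henselian discrete valuations, residue fields and ramification data.
-/

noncomputable section

open scoped TensorProduct

/-- The value monoid of a discrete (rank one, value group `ℤ`) valuation. -/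
abbrev Zm0 : Type := WithZero (Multiplicative ℤ)

/-- A finite-dimensional central division algebra over `E`, bundled together with its
Schur index `ind` (the positive integer whose square is the dimension). -/
structure CentralDivisionAlgebra (E : Type) [Field E] where
  D : Type
  [instDivisionRing : DivisionRing D]
  [instAlgebra : Algebra E D]
  finiteDimensional : FiniteDimensional E D
  central : Subalgebra.center E D = ⊥
  ind : ℕ
  ind_sq : ind * ind = Module.finrank E D

attribute [instance] CentralDivisionAlgebra.instDivisionRing CentralDivisionAlgebra.instAlgebra

/-- `E` is primarily quasilocal (PQL): every finite cyclic Galois extension `F` of `E` embeds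
as an `E`-subalgebra in every finite-dimensional central division `E`-algebra whose Schur index
is divisible by `[F : E]`. -/
def IsPQL (E : Type) [Field E] : Prop :=
  ∀ (F : Type) [Field F] [Algebra E F] [FiniteDimensional E F],
    IsGalois E F → IsCyclic (F ≃ₐ[E] F) →
      ∀ A : CentralDivisionAlgebra E, Module.finrank E F ∣ A.ind →
        Nonempty (F →ₐ[E] A.D)

/-- A Galois extension of `E` of degree `n`, bundled. -/
structure GaloisExtensionOfDegree (E : Type) [Field E] (n : ℕ) where
  F : Type
  [instField : Field F]
  [instAlgebra : Algebra E F]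
  galois : IsGalois E F
  deg : Module.finrank E F = n

/-- `P(E)`: the set of primes `p` such that `E` admits a Galois extension of degree `p`. -/
def primesP (E : Type) [Field E] : Set ℕ :=
  {p | p.Prime ∧ Nonempty (GaloisExtensionOfDegree E p)}

/-- The `p`-primary component of the Brauer group of `E` is nontrivial, expressed via the
existence of a central division `E`-algebra of Schur index divisible by `p`. -/
def BrauerPNontrivial (E : Type) [Field E] (p : ℕ) : Prop :=
  ∃ A : CentralDivisionAlgebra E, p ∣ A.ind ∧ A.ind ≠ 1

/-- `E` is strictly PQL: `E` is PQL and `Br(E)_p ≠ 0` for every `p ∈ P(E)`. -/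
def IsStrictlyPQL (E : Type) [Field E] : Prop :=
  IsPQL E ∧ ∀ p ∈ primesP E, BrauerPNontrivial E p

/-- `E` is quasilocal: every finite extension of `E` is PQL. -/
def IsQuasilocal (E : Type) [Field E] : Prop :=
  ∀ (L : Type) [Field L] [Algebra E L], FiniteDimensional E L → IsPQL L

/-- `E` is strictly quasilocal: every finite extension of `E` is strictly PQL. -/
def IsStrictlyQuasilocal (E : Type) [Field E] : Prop :=
  ∀ (L : Type) [Field L] [Algebra E L], FiniteDimensional E L → IsStrictlyPQL L

/-- The norm group `N(L/K)`, as a subgroup of `Kˣ`. -/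
def normGroup (K L : Type) [Field K] [Field L] [Algebra K L] : Subgroup Kˣ :=
  MonoidHom.range (Units.map (Algebra.norm K : L →* K))

/-- A fixed separable closure of `K` (inside a fixed algebraic closure). -/
abbrev SepClosure (K : Type) [Field K] : IntermediateField K (AlgebraicClosure K) :=
  separableClosure K (AlgebraicClosure K)

/-- `Nr(K)`: the set of norm groups of finite extensions of `K` inside `K_sep`. -/
def Nr (K : Type) [Field K] : Set (Subgroup Kˣ) :=
  {U | ∃ L : IntermediateField K ↥(SepClosure K), FiniteDimensional K ↥L ∧ normGroup K ↥L = U}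

/-- `L` is a class field of the subgroup `U ≤ Kˣ`: `N(L/K) = U` and `[Kˣ : U] = [L : K]`. -/
def IsClassField (K : Type) [Field K] (U : Subgroup Kˣ) (L : Type) [Field L] [Algebra K L] :
    Prop :=
  normGroup K L = U ∧ U.index = Module.finrank K L

/-- `L/K` is an abelian extension: Galois with commutative Galois group. -/
def IsAbelianExt (K L : Type) [Field K] [Field L] [Algebra K L] : Prop :=
  IsGalois K L ∧ ∀ a b : L ≃ₐ[K] L, a * b = b * a

/-- `R_ab`: the maximal abelian extension of `K` inside `R`. -/
def abelianPart (K R : Type) [Field K] [Field R] [Algebra K R] : IntermediateField K R :=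
  ⨆ (F : IntermediateField K R) (_ : IsAbelianExt K ↥F), F

/-- `R_{ab,p}`: the maximal abelian extension of `K` inside `R` of `p`-power degree. -/
def abelianPartP (E R : Type) [Field E] [Field R] [Algebra E R] (p : ℕ) :
    IntermediateField E R :=
  ⨆ (F : IntermediateField E R)
    (_ : IsAbelianExt E ↥F ∧ ∃ k : ℕ, Module.finrank E ↥F = p ^ k), F

/-- `P₀(E)`: primes `p` with `p = char E` or `E` contains a primitive `p`-th root of unity. -/
def P0Set (E : Type) [Field E] : Set ℕ :=
  {p | p.Prime ∧ (ringChar E = p ∨ ∃ x : E, IsPrimitiveRoot x p)}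

/-- `P₁(E)`: primes `p ∉ P₀(E)` with `E* ≠ E*^p`. -/
def P1Set (E : Type) [Field E] : Set ℕ :=
  {p | p.Prime ∧ p ∉ P0Set E ∧ ∃ a : Eˣ, ∀ b : Eˣ, b ^ p ≠ a}

/-- `P₂(E)`: the remaining primes. -/
def P2Set (E : Type) [Field E] : Set ℕ :=
  {p | p.Prime ∧ p ∉ P0Set E ∧ p ∉ P1Set E}

/-- The residue field of a valued field `(K, v)`. -/
abbrev ResField (K : Type) [Field K] (v : Valuation K Zm0) : Type :=
  IsLocalRing.ResidueField ↥v.valuationSubring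

variable {K R : Type} [Field K] [Field R] [Algebra K R]

/-- If `w` prolongs `v` (with ramification index `e`), the inclusion of valuation rings. -/
def valuationSubringHom (v : Valuation K Zm0) (w : Valuation R Zm0) (e : ℕ)
    (hcomp : ∀ x : K, w (algebraMap K R x) = v x ^ e) :
    ↥v.valuationSubring →+* ↥w.valuationSubring where
  toFun x := ⟨algebraMap K R x, by
    rw [Valuation.mem_valuationSubring_iff, hcomp]
    exact pow_le_one' ((v.mem_valuationSubring_iff _).mp x.2) e⟩
  map_one' := Subtype.ext (by simp)
  map_mul' x y := Subtype.ext (by simp)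
  map_zero' := Subtype.ext (by simp)
  map_add' x y := Subtype.ext (by simp)

theorem isLocalHom_valuationSubringHom (v : Valuation K Zm0) (w : Valuation R Zm0) (e : ℕ)
    (he : 0 < e) (hcomp : ∀ x : K, w (algebraMap K R x) = v x ^ e) :
    IsLocalHom (valuationSubringHom v w e hcomp) := by
  constructor
  intro a ha
  rcases ha with ⟨u, hu⟩
  have hmul : ((u : ↥w.valuationSubring) : R) * ((↑u⁻¹ : ↥w.valuationSubring) : R) = 1 := by
    norm_cast
    rw [mul_inv_cancel]
    rfl
  have hle1 : w ((u : ↥w.valuationSubring) : R) ≤ 1 := (u : ↥w.valuationSubring).2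
  have hle2 : w ((↑u⁻¹ : ↥w.valuationSubring) : R) ≤ 1 := (↑u⁻¹ : ↥w.valuationSubring).2
  have hprod : w ((u : ↥w.valuationSubring) : R) * w ((↑u⁻¹ : ↥w.valuationSubring) : R) = 1 := by
    rw [← map_mul, hmul, map_one]
  have h1 : w ((u : ↥w.valuationSubring) : R) = 1 := by
    rcases lt_or_eq_of_le hle1 with h | h
    · exfalso
      have hlt : w ((u : ↥w.valuationSubring) : R) * w ((↑u⁻¹ : ↥w.valuationSubring) : R) < 1 := by
        calc w ((u : ↥w.valuationSubring) : R) * w ((↑u⁻¹ : ↥w.valuationSubring) : R)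
            ≤ w ((u : ↥w.valuationSubring) : R) * 1 := by gcongr
          _ = w ((u : ↥w.valuationSubring) : R) := mul_one _
          _ < 1 := h
      rw [hprod] at hlt
      exact lt_irrefl _ hlt
    · exact h
  have hval : w ((algebraMap K R) (a : K)) = 1 := by
    have heq : ((valuationSubringHom v w e hcomp a : ↥w.valuationSubring) : R)
        = algebraMap K R (a : K) := rfl
    rw [hu, heq] at h1
    exact h1
  have hpow : v (a : K) ^ e = 1 := by rw [← hcomp]; exact hval
  have hne : v (a : K) ≠ 0 := by
    intro h0
    rw [h0, zero_pow he.ne'] at hpow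
    exact zero_ne_one hpow
  have hv1 : v (a : K) = 1 := by
    rcases WithZero.ne_zero_iff_exists.mp hne with ⟨m, hm⟩
    rw [← hm] at hpow
    rw [← hm]
    norm_cast at hpow ⊢
    have h2 := congrArg Multiplicative.toAdd hpow
    rw [toAdd_pow] at h2
    simp only [toAdd_one] at h2
    have hm0 : Multiplicative.toAdd m = 0 := by
      rcases smul_eq_zero.mp h2 with h | h
      · exact absurd h he.ne'
      · exact h
    have hm1 : m = 1 := by
      rw [← ofAdd_toAdd m, hm0]
      rfl
    rw [hm1]
  have hane : (a : K) ≠ 0 := by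
    intro h0
    rw [h0, map_zero] at hv1
    exact zero_ne_one hv1
  refine IsUnit.of_mul_eq_one (a := a) ⟨(a : K)⁻¹, ?_⟩ (Subtype.ext ?_)
  · rw [Valuation.mem_valuationSubring_iff, map_inv₀, hv1, inv_one]
  · exact mul_inv_cancel₀ hane

/-- The induced embedding of residue fields. -/
def residueMap (v : Valuation K Zm0) (w : Valuation R Zm0) (e : ℕ) (he : 0 < e)
    (hcomp : ∀ x : K, w (algebraMap K R x) = v x ^ e) :
    ResField K v →+* ResField R w := by
  haveI := isLocalHom_valuationSubringHom v w e he hcomp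
  exact IsLocalRing.ResidueField.map (valuationSubringHom v w e hcomp)

/-- The residue degree `[R̂ : K̂]` of the extension of valued fields. -/
def resDeg (v : Valuation K Zm0) (w : Valuation R Zm0) (e : ℕ) (he : 0 < e)
    (hcomp : ∀ x : K, w (algebraMap K R x) = v x ^ e) : ℕ :=
  letI : Algebra (ResField K v) (ResField R w) := (residueMap v w e he hcomp).toAlgebra
  Module.finrank (ResField K v) (ResField R w)

/-- The residue extension `R̂ / K̂` is abelian. -/
def ResidueAbelian (v : Valuation K Zm0) (w : Valuation R Zm0) (e : ℕ) (he : 0 < e)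
    (hcomp : ∀ x : K, w (algebraMap K R x) = v x ^ e) : Prop :=
  letI : Algebra (ResField K v) (ResField R w) := (residueMap v w e he hcomp).toAlgebra
  IsAbelianExt (ResField K v) (ResField R w)

/-- The residue extension `R̂ / K̂` is separable. -/
def ResidueSeparable (v : Valuation K Zm0) (w : Valuation R Zm0) (e : ℕ) (he : 0 < e)
    (hcomp : ∀ x : K, w (algebraMap K R x) = v x ^ e) : Prop :=
  letI : Algebra (ResField K v) (ResField R w) := (residueMap v w e he hcomp).toAlgebra
  Algebra.IsSeparable (ResField K v) (ResField R w)

/-- `π` is a uniformizer of `(K, v)`: its value generates the whole value group. -/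
def IsUniformizer (v : Valuation K Zm0) (π : K) : Prop :=
  v π ≠ 0 ∧ ∀ γ : Zm0, γ ≠ 0 → ∃ k : ℤ, γ = v π ^ k

/-- `U(K)`: the unit group of the valuation ring, as a subgroup of `Kˣ`. -/
def unitSubgroup (v : Valuation K Zm0) : Subgroup Kˣ where
  carrier := {x : Kˣ | v (x : K) = 1}
  one_mem' := by simp
  mul_mem' := by
    intro a b ha hb
    simp only [Set.mem_setOf_eq, Units.val_mul, map_mul] at *
    rw [ha, hb, one_mul]
  inv_mem' := by
    intro a ha
    simp only [Set.mem_setOf_eq] at *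
    rw [Units.val_inv_eq_inv_val, map_inv₀, ha, inv_one]

/-- `Op(K)`: the set of subgroups of `Kˣ` that are open w.r.t. the valuation topology and of
finite index. -/
def OpSet (K : Type) [Field K] (v : Valuation K Zm0) : Set (Subgroup Kˣ) :=
  letI : Valued K Zm0 := Valued.mk' v
  {U | IsOpen (U : Set Kˣ) ∧ U.index ≠ 0}

/-- `Σ(K)`: the set of subgroups of `Kˣ` of finite index not divisible by the residue
characteristic. -/
def SigmaSet (K : Type) [Field K] (v : Valuation K Zm0) : Set (Subgroup Kˣ) :=
  {U | U.index ≠ 0 ∧ ¬ ringChar (ResField K v) ∣ U.index}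

end

/-!
Coprime degrees make `L1` and `L2` linearly disjoint, so `[L : L2] = [L1 : E]`,
`[L : L1] = [L2 : E]`, and on `L1` the norm of `L/L2` is the norm of `L1/E`. Every norm group
`N(F/E)` contains `E*^[F:E]`, and `N(F/E)^[L:F] ⊆ N(L/E)`; thus each inclusion to be shown
holds up to two coprime exponents, hence holds. For the same reason
`N(L1/E) N(L2/E) = E*`, and the isomorphism is the Chinese remainder theorem.
-/

namespace Subgroup

variable {G : Type*} [Group G] {H K : Subgroup G} {m n : ℕ}

theorem mem_of_pow_mem_of_coprime (hmn : m.Coprime n) {g : G} (hm : g ^ m ∈ H) (hn : g ^ n ∈ H) :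
    g ∈ H := by
  obtain ⟨a, b, hab⟩ := Nat.isCoprime_iff_coprime.mpr hmn
  have hg : g = (g ^ m) ^ a * (g ^ n) ^ b := by
    rw [← zpow_natCast, ← zpow_natCast, ← zpow_mul, ← zpow_mul, ← zpow_add, mul_comm (m : ℤ),
      mul_comm (n : ℤ), hab, zpow_one]
  rw [hg]
  exact mul_mem (zpow_mem hm a) (zpow_mem hn b)

theorem sup_eq_top_of_pow_mem_of_coprime (hmn : m.Coprime n) (hH : ∀ g : G, g ^ m ∈ H)
    (hK : ∀ g : G, g ^ n ∈ K) : H ⊔ K = ⊤ :=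
  eq_top_iff.mpr fun g _ ↦
    mem_of_pow_mem_of_coprime hmn (mem_sup_left (hH g)) (mem_sup_right (hK g))

end Subgroup

namespace QuotientGroup

noncomputable def quotientInfEquivProdOfSupEqTop {G : Type*} [CommGroup G] (H K : Subgroup G)
    (hHK : H ⊔ K = ⊤) : G ⧸ (H ⊓ K) ≃* (G ⧸ H) × (G ⧸ K) :=
  let f := (mk' H).prod (mk' K)
  have hker : f.ker = H ⊓ K := by
    rw [MonoidHom.ker_prod, ker_mk', ker_mk']
  have hsurj : Function.Surjective f := by
    rintro ⟨⟨x⟩, ⟨y⟩⟩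
    obtain ⟨h, hh, k, hk, hxy⟩ := Subgroup.mem_sup.mp (hHK ▸ Subgroup.mem_top (x⁻¹ * y))
    obtain rfl : y = x * h * k := by rw [mul_assoc, hxy, mul_inv_cancel_left]
    refine ⟨x * h, Prod.ext (eq_iff_div_mem.mpr ?_) (eq_iff_div_mem.mpr ?_)⟩
    · simpa using hh
    · simpa using hk
  (quotientMulEquivOfEq hker.symm).trans (quotientKerEquivOfSurjective f hsurj)

end QuotientGroup

section NormGroup

open Module

variable (K F L : Type) [Field K] [Field F] [Field L] [Algebra K F] [Algebra F L] [Algebra K L]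
  [IsScalarTower K F L]

theorem pow_finrank_mem_normGroup (u : Kˣ) : u ^ finrank K F ∈ normGroup K F :=
  ⟨Units.map (algebraMap K F : K →* F) u, Units.ext (by simp [Algebra.norm_algebraMap])⟩

theorem normGroup_le_normGroup_of_isScalarTower : normGroup K L ≤ normGroup K F := by
  rintro _ ⟨x, rfl⟩
  exact ⟨Units.map (Algebra.norm F : L →* F) x, Units.ext (by simp [Algebra.norm_norm])⟩

variable {K F L}

theorem pow_finrank_mem_normGroup_of_mem {u : Kˣ} (hu : u ∈ normGroup K F) :
    u ^ finrank F L ∈ normGroup K L := by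
  obtain ⟨b, rfl⟩ := hu
  refine ⟨Units.map (algebraMap F L : F →* L) b, Units.ext ?_⟩
  change Algebra.norm K (algebraMap F L b) = _
  rw [← Algebra.norm_norm (S := F), Algebra.norm_algebraMap]
  simp

theorem pow_finrank_mem_normGroup_of_algebraMap_mem {u : Kˣ}
    (hu : Units.map (algebraMap K F : K →* F) u ∈ normGroup F L) :
    u ^ finrank K F ∈ normGroup K L := by
  obtain ⟨x, hx⟩ := hu
  refine ⟨x, Units.ext ?_⟩
  have hx' : Algebra.norm F (x : L) = algebraMap K F u := congrArg Units.val hx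
  change Algebra.norm K (x : L) = _
  rw [← Algebra.norm_norm (S := F), hx', Algebra.norm_algebraMap]
  simp

end NormGroup

namespace IntermediateField.LinearDisjoint

variable {F E : Type} [Field F] [Field E] [Algebra F E] [FiniteDimensional F E]
  {A B : IntermediateField F E}

theorem normGroup_le_comap (H : A.LinearDisjoint B) (hAB : A ⊔ B = ⊤) :
    normGroup F B ≤ (normGroup A E).comap (Units.map (algebraMap F A : F →* A)) := by
  rintro _ ⟨b, rfl⟩
  exact ⟨Units.map (algebraMap B E : B →* E) b, Units.ext (H.norm_algebraMap hAB b)⟩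

end IntermediateField.LinearDisjoint

section CoprimeCompositum

open Module

variable {E L : Type} [Field E] [Field L] [Algebra E L] [FiniteDimensional E L]
  {L1 L2 : IntermediateField E L}

theorem normGroup_eq_inf_of_coprime (hL : L1 ⊔ L2 = ⊤)
    (hcop : (finrank E L1).Coprime (finrank E L2)) :
    normGroup E L = normGroup E L1 ⊓ normGroup E L2 := by
  have hdisj : L1.LinearDisjoint L2 := .of_finrank_coprime hcop
  refine le_antisymm (le_inf (normGroup_le_normGroup_of_isScalarTower E L1 L)
    (normGroup_le_normGroup_of_isScalarTower E L2 L)) ?_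
  rintro u ⟨hu1, hu2⟩
  have hdeg1 : finrank L1 L = finrank E L2 := hdisj.finrank_left_eq_finrank hL
  have hdeg2 : finrank L2 L = finrank E L1 := hdisj.finrank_right_eq_finrank hL
  exact Subgroup.mem_of_pow_mem_of_coprime hcop (hdeg2 ▸ pow_finrank_mem_normGroup_of_mem hu2)
    (hdeg1 ▸ pow_finrank_mem_normGroup_of_mem hu1)

theorem normGroup_eq_comap_of_coprime (hL : L1 ⊔ L2 = ⊤)
    (hcop : (finrank E L1).Coprime (finrank E L2)) :
    normGroup E L1 = (normGroup L2 L).comap (Units.map (algebraMap E L2 : E →* L2)) := by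
  have hdisj : L2.LinearDisjoint L1 := .of_finrank_coprime hcop.symm
  refine le_antisymm (hdisj.normGroup_le_comap (sup_comm L1 L2 ▸ hL)) fun u hu ↦ ?_
  exact Subgroup.mem_of_pow_mem_of_coprime hcop (pow_finrank_mem_normGroup E L1 u)
    (normGroup_le_normGroup_of_isScalarTower E L1 L
      (pow_finrank_mem_normGroup_of_algebraMap_mem hu))

end CoprimeCompositum

theorem stmt10_norm_groups_of_coprime_compositum_general
    (E L : Type) [Field E] [Field L] [Algebra E L] [FiniteDimensional E L]
    (L1 L2 : IntermediateField E L) (hL : L1 ⊔ L2 = ⊤)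
    (hcop : Nat.Coprime (Module.finrank E ↥L1) (Module.finrank E ↥L2)) :
    normGroup E L = normGroup E ↥L1 ⊓ normGroup E ↥L2 ∧
    normGroup E ↥L1 = Subgroup.comap (Units.map (algebraMap E ↥L2 : E →* ↥L2))
      (normGroup ↥L2 L) ∧
    Nonempty ((Eˣ ⧸ normGroup E L) ≃*
      ((Eˣ ⧸ normGroup E ↥L1) × (Eˣ ⧸ normGroup E ↥L2))) := by
  have hinf := normGroup_eq_inf_of_coprime hL hcop
  have hsup : normGroup E L1 ⊔ normGroup E L2 = ⊤ :=
    Subgroup.sup_eq_top_of_pow_mem_of_coprime hcop (pow_finrank_mem_normGroup E L1)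
      (pow_finrank_mem_normGroup E L2)
  refine ⟨hinf, normGroup_eq_comap_of_coprime hL hcop, ⟨?_⟩⟩
  rw [hinf]
  exact QuotientGroup.quotientInfEquivProdOfSupEqTop _ _ hsup

/-- Lemma 2.1: norm groups of a compositum of extensions of coprime degrees. -/
theorem stmt10_norm_groups_of_coprime_compositum
    (E L : Type) [Field E] [Field L] [Algebra E L] [FiniteDimensional E L]
    [Algebra.IsSeparable E L]
    (L1 L2 : IntermediateField E L) (hL : L1 ⊔ L2 = ⊤)
    (hcop : Nat.Coprime (Module.finrank E ↥L1) (Module.finrank E ↥L2)) :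
    normGroup E L = normGroup E ↥L1 ⊓ normGroup E ↥L2 ∧
    normGroup E ↥L1 = Subgroup.comap (Units.map (algebraMap E ↥L2 : E →* ↥L2))
      (normGroup ↥L2 L) ∧
    Nonempty ((Eˣ ⧸ normGroup E L) ≃*
      ((Eˣ ⧸ normGroup E ↥L1) × (Eˣ ⧸ normGroup E ↥L2))) :=
  stmt10_norm_groups_of_coprime_compositum_general E L L1 L2 hL hcop
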